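/- Let m > 0 and f(τ,u,v,t) be degree m, real-analytic in v̄, with θ_f = −(2i)^{1/2}(τ−τ̄)^{1/2} e^{−2πim(v−v̄)²/(τ−τ̄)} ∂f/∂v̄. If for k ∈ ℤ, f(τ, u+kτ/(2m), v+kτ/(2m), t) = e^{2πik(v−u)} f(τ,u,v,t), then θ_f(τ, u+kτ/(2m), v+kτ/(2m), t) = e^{2πik(v̄−u)} e^{(πik²/(2m))(τ̄−τ)} θ_f(τ,u,v,t). -/

import Mathlib

open Complex

noncomputable def πc : ℂ := Real.pi

/-- Antiholomorphic Wirtinger derivative `∂f/∂z̄`. -/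
noncomputable def wdb (f : ℂ → ℂ) (z : ℂ) : ℂ :=
  (fderiv ℝ f z 1 + Complex.I * fderiv ℝ f z Complex.I) / 2

/-- `θ_f = −(2i)^{1/2}(τ−τ̄)^{1/2} e^{−2πim(v−v̄)²/(τ−τ̄)} ∂f/∂v̄`. -/
noncomputable def thetaG (m : ℝ) (f : ℂ → ℂ → ℂ → ℂ → ℂ) : ℂ → ℂ → ℂ → ℂ → ℂ :=
  fun τ u v t =>
    -((2 * I) ^ ((1 : ℂ) / 2)) * (τ - (starRingEnd ℂ) τ) ^ ((1 : ℂ) / 2) *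
      Complex.exp (-2 * πc * I * m * (v - (starRingEnd ℂ) v) ^ 2 / (τ - (starRingEnd ℂ) τ)) *
      wdb (fun v' => f τ u v' t) v

/-!
The shifted slice `w ↦ f(τ, u + c, w, t)`, `c = kτ/(2m)`, is `e^{2πik(w - c - u)}` times the
translate by `c` of `w ↦ f(τ, u, w, t)`. A holomorphic factor passes through `∂/∂w̄`, so `∂f/∂v̄`
picks up `e^{2πik(v - u)}`; the Gaussian factor of `θ_f` contributes
`e^{-2πik(v - v̄)} e^{πik²(τ̄ - τ)/(2m)}`, which turns `v` into `v̄`.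
-/

open ComplexConjugate

lemma wdb_comp_sub (g : ℂ → ℂ) (c z : ℂ) : wdb (fun w => g (w - c)) z = wdb g (z - c) := by
  simp only [wdb, fderiv_comp_sub]

lemma wdb_holomorphic_mul {h g : ℂ → ℂ} {z : ℂ} (hh : DifferentiableAt ℂ h z)
    (hg : DifferentiableAt ℝ g z) : wdb (fun w => h w * g w) z = h z * wdb g z := by
  have h_complexLinear : fderiv ℂ h z I = I * fderiv ℂ h z 1 := by
    rw [← smul_eq_mul, ← map_smul, smul_eq_mul, mul_one]
  rw [wdb, wdb, fderiv_fun_mul (hh.restrictScalars ℝ) hg, hh.fderiv_restrictScalars ℝ]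
  simp only [add_apply, smul_apply, ContinuousLinearMap.coe_restrictScalars', smul_eq_mul,
    h_complexLinear]
  linear_combination (g z * fderiv ℂ h z 1 / 2) * I_sq

lemma exp_gaussian_shift (m k : ℝ) (hm : m ≠ 0) {τ : ℂ} (hτ : τ - conj τ ≠ 0) (u v : ℂ) :
    exp (-2 * πc * I * m * ((v + k * τ / (2 * m)) - conj (v + k * τ / (2 * m))) ^ 2 /
        (τ - conj τ)) * exp (2 * πc * I * k * (v - u)) =
      exp (2 * πc * I * k * (conj v - u)) * exp (πc * I * (k : ℂ) ^ 2 / (2 * m) * (conj τ - τ)) *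
        exp (-2 * πc * I * m * (v - conj v) ^ 2 / (τ - conj τ)) := by
  have hm' : (m : ℂ) ≠ 0 := ofReal_ne_zero.mpr hm
  simp only [← exp_add, map_add, map_div₀, map_mul, conj_ofReal, map_ofNat]
  congr 1
  field_simp
  ring

theorem thetaG_elliptic_small_tau_general (m : ℝ) (hm : 0 < m) (f : ℂ → ℂ → ℂ → ℂ → ℂ)
    (hdiff : ∀ τ u t, 0 < τ.im → Differentiable ℝ (fun v => f τ u v t))
    (k : ℤ)
    (hell : ∀ τ u v t : ℂ, 0 < τ.im →
      f τ (u + k * τ / (2 * m)) (v + k * τ / (2 * m)) t =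
        Complex.exp (2 * πc * I * k * (v - u)) * f τ u v t) :
    ∀ τ u v t : ℂ, 0 < τ.im →
      thetaG m f τ (u + k * τ / (2 * m)) (v + k * τ / (2 * m)) t =
        Complex.exp (2 * πc * I * k * ((starRingEnd ℂ) v - u)) *
          Complex.exp (πc * I * (k : ℂ) ^ 2 / (2 * m) * ((starRingEnd ℂ) τ - τ)) *
          thetaG m f τ u v t := by
  intro τ u v t hτ
  set c : ℂ := k * τ / (2 * m)
  have hτ_sub_conj : τ - conj τ ≠ 0 := by
    rw [sub_conj]
    exact mul_ne_zero (ofReal_ne_zero.mpr (by positivity)) I_ne_zero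
  have h_slice : (fun w => f τ (u + c) w t) =
      fun w => exp (2 * πc * I * k * (w - c - u)) * f τ u (w - c) t := by
    funext w
    rw [← hell τ u (w - c) t hτ, sub_add_cancel]
  have h_wdb : wdb (fun w => f τ (u + c) w t) (v + c) =
      exp (2 * πc * I * k * (v - u)) * wdb (fun w => f τ u w t) v := by
    rw [h_slice, wdb_holomorphic_mul (by fun_prop)
      ((differentiableAt_comp_sub c).mpr (hdiff τ u t hτ _)), wdb_comp_sub (fun w => f τ u w t),
      add_sub_cancel_right]
  have h_gauss := exp_gaussian_shift m k hm.ne' hτ_sub_conj u v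
  push_cast at h_gauss
  simp only [thetaG]
  rw [h_wdb]
  linear_combination (-((2 * I) ^ ((1 : ℂ) / 2)) * (τ - conj τ) ^ ((1 : ℂ) / 2) *
    wdb (fun w => f τ u w t) v) * h_gauss

/-- Elliptic transformation of `θ_f` under `(u,v) ↦ (u + kτ/(2m), v + kτ/(2m))`. -/
theorem thetaG_elliptic_small_tau (m : ℝ) (hm : 0 < m) (f : ℂ → ℂ → ℂ → ℂ → ℂ)
    (hdeg : ∀ τ u v t, f τ u v t = Complex.exp (2 * πc * I * m * t) * f τ u v 0)
    (hdiff : ∀ τ u t, 0 < τ.im → Differentiable ℝ (fun v => f τ u v t))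
    (k : ℤ)
    (hell : ∀ τ u v t : ℂ, 0 < τ.im →
      f τ (u + k * τ / (2 * m)) (v + k * τ / (2 * m)) t =
        Complex.exp (2 * πc * I * k * (v - u)) * f τ u v t) :
    ∀ τ u v t : ℂ, 0 < τ.im →
      thetaG m f τ (u + k * τ / (2 * m)) (v + k * τ / (2 * m)) t =
        Complex.exp (2 * πc * I * k * ((starRingEnd ℂ) v - u)) *
          Complex.exp (πc * I * (k : ℂ) ^ 2 / (2 * m) * ((starRingEnd ℂ) τ - τ)) *
          thetaG m f τ u v t :=
  thetaG_elliptic_small_tau_general m hm f hdiff k hell
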